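/- arXiv:1811.00980 — 7 statements merged into one kernel-verified Lean document; each statement's English description precedes it below -/
import Mathlib

section
/- Let f be smooth with gradient, h be convex, X ∈ ℝ^(n×r), t > 0, and define g(V) = ⟨∇f(X), V⟩ + (1/(2t))‖V‖² + h(X + V). Let T be a linear subspace and V* a minimizer of g over T. Then for every α ∈ [0,1], g(αV*) − g(0) ≤ ((α−2)α/(2t))‖V*‖². -/
/-!
Along the ray `β ↦ β • V` the objective is a convex function plus the exact quadratic
`β² ‖V‖² / (2t)`, so `g (β • V)` lies below the chord between `g 0` and `g V` by
`β (1 - β) ‖V‖² / (2t)`. Minimality of `V` on the ray (which lies in `T`) and `β → 1` turn this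
into `g V - g 0 ≤ -‖V‖² / (2t)`; inserting that back into the chord bound at `β = α` gives the
claim.
-/

open Set Filter Topology

theorem sub_le_neg_of_chord_bound_of_isMinOn {φ : ℝ → ℝ} {K : ℝ}
    (hchord : ∀ β ∈ Icc (0 : ℝ) 1, φ β ≤ β * φ 1 + (1 - β) * φ 0 - β * (1 - β) * K)
    (hmin : IsMinOn φ (Icc 0 1) 1) :
    φ 1 - φ 0 ≤ -K := by
  have hbound : ∀ β ∈ Ioo (0 : ℝ) 1, φ 1 - φ 0 ≤ -(β * K) := by
    intro β hβ
    have hchord_β := hchord β (Ioo_subset_Icc_self hβ)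
    have hmin_β : φ 1 ≤ φ β := hmin (Ioo_subset_Icc_self hβ)
    have hpos : 0 < 1 - β := sub_pos.mpr hβ.2
    nlinarith
  have hlim : Tendsto (fun β : ℝ => -(β * K)) (𝓝[<] 1) (𝓝 (-K)) := by
    have : Continuous fun β : ℝ => -(β * K) := by fun_prop
    simpa using (this.tendsto 1).mono_left nhdsWithin_le_nhds
  exact ge_of_tendsto hlim (eventually_of_mem (Ioo_mem_nhdsLT zero_lt_one) hbound)

theorem sub_le_of_chord_bound_of_isMinOn {φ : ℝ → ℝ} {K : ℝ}
    (hchord : ∀ β ∈ Icc (0 : ℝ) 1, φ β ≤ β * φ 1 + (1 - β) * φ 0 - β * (1 - β) * K)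
    (hmin : IsMinOn φ (Icc 0 1) 1) {α : ℝ} (hα : α ∈ Icc (0 : ℝ) 1) :
    φ α - φ 0 ≤ (α - 2) * α * K := by
  have hdescent := sub_le_neg_of_chord_bound_of_isMinOn hchord hmin
  have hchord_α := hchord α hα
  nlinarith [mul_le_mul_of_nonneg_left hdescent hα.1]

section ProxObjective

variable {E : Type*} [NormedAddCommGroup E] [InnerProductSpace ℝ E]

theorem prox_objective_smul_le {t : ℝ} {h : E → ℝ} {X c : E} (hh : ConvexOn ℝ univ h)
    {g : E → ℝ} (hg : ∀ V, g V = inner ℝ c V + (1 / (2 * t)) * ‖V‖ ^ 2 + h (X + V))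
    (V : E) {β : ℝ} (hβ : β ∈ Icc (0 : ℝ) 1) :
    g (β • V) ≤ β * g V + (1 - β) * g 0 - β * (1 - β) * ((1 / (2 * t)) * ‖V‖ ^ 2) := by
  have hconv : h (X + β • V) ≤ β * h (X + V) + (1 - β) * h X := by
    have := hh.2 (mem_univ (X + V)) (mem_univ X) hβ.1 (sub_nonneg.mpr hβ.2) (by ring)
    rwa [show β • (X + V) + (1 - β) • X = X + β • V by module, smul_eq_mul, smul_eq_mul]
      at this
  rw [hg, hg, hg, real_inner_smul_right, norm_smul, Real.norm_of_nonneg hβ.1]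
  simp only [inner_zero_right, norm_zero, add_zero]
  nlinarith

end ProxObjective

theorem stmt_1_general {n r : ℕ} (t : ℝ)
    (h : EuclideanSpace ℝ (Fin n × Fin r) → ℝ)
    (X c : EuclideanSpace ℝ (Fin n × Fin r))
    (hh : ConvexOn ℝ Set.univ h)
    (g : EuclideanSpace ℝ (Fin n × Fin r) → ℝ)
    (hg : ∀ V, g V = (inner ℝ c V : ℝ) + (1 / (2 * t)) * ‖V‖ ^ 2 + h (X + V))
    (T : Submodule ℝ (EuclideanSpace ℝ (Fin n × Fin r)))
    (V : EuclideanSpace ℝ (Fin n × Fin r)) (hVT : V ∈ T)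
    (hmin : ∀ W ∈ T, g V ≤ g W) :
    ∀ α ∈ Set.Icc (0 : ℝ) 1,
      g (α • V) - g 0 ≤ ((α - 2) * α / (2 * t)) * ‖V‖ ^ 2 := by
  intro α hα
  have hmin_ray : IsMinOn (fun β : ℝ => g (β • V)) (Icc 0 1) 1 := fun β _ => by
    simpa using hmin (β • V) (T.smul_mem β hVT)
  have key := sub_le_of_chord_bound_of_isMinOn (φ := fun β : ℝ => g (β • V))
    (fun β hβ => by simpa using prox_objective_smul_le hh hg V hβ) hmin_ray hα
  simp only [zero_smul] at key
  convert key using 1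
  ring

/-- descent property of the minimizer of the proximal-gradient
subproblem over a subspace. -/
theorem stmt_1 {n r : ℕ} (t : ℝ) (ht : 0 < t)
    (f h : EuclideanSpace ℝ (Fin n × Fin r) → ℝ)
    (X c : EuclideanSpace ℝ (Fin n × Fin r))
    (hc : HasGradientAt f c X)
    (hh : ConvexOn ℝ Set.univ h)
    (g : EuclideanSpace ℝ (Fin n × Fin r) → ℝ)
    (hg : ∀ V, g V = (inner ℝ c V : ℝ) + (1 / (2 * t)) * ‖V‖ ^ 2 + h (X + V))
    (T : Submodule ℝ (EuclideanSpace ℝ (Fin n × Fin r)))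
    (V : EuclideanSpace ℝ (Fin n × Fin r)) (hVT : V ∈ T)
    (hmin : ∀ W ∈ T, g V ≤ g W) :
    ∀ α ∈ Set.Icc (0 : ℝ) 1,
      g (α • V) - g 0 ≤ ((α - 2) * α / (2 * t)) * ‖V‖ ^ 2 :=
  stmt_1_general t h X c hh g hg T V hVT hmin
end

section
/- Let f : ℝ^(n×r) → ℝ be differentiable with L-Lipschitz gradient, and let M ⊂ ℝ^(n×r) be a set with retraction R satisfying ‖R_X(ξ) − X‖ ≤ M₁‖ξ‖ and ‖R_X(ξ) − (X+ξ)‖ ≤ M₂‖ξ‖² for all X ∈ M and tangent vectors ξ, and suppose ‖∇f(X)‖ ≤ G for all X ∈ M. Then for all X ∈ M, tangent ξ, and α > 0: f(R_X(αξ)) − f(X) ≤ α⟨∇f(X), ξ⟩ + (M₂G + LM₁²/2) α² ‖ξ‖². -/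
/-!
With `Y = R_X(αξ)`, the descent inequality bounds `f Y - f X` by
`⟪∇f X, Y - X⟫ + L/2 ‖Y - X‖²`. Writing `Y - X = αξ + (Y - (X + αξ))`, Cauchy–Schwarz and the
second-order retraction bound make the inner product at most `α⟪∇f X, ξ⟫ + G M₂ α² ‖ξ‖²`,
while the first-order bound gives `‖Y - X‖² ≤ M₁² α² ‖ξ‖²`.
-/

open scoped RealInnerProductSpace

theorem sub_le_deriv_add_half_of_deriv_sub_le {φ φ' : ℝ → ℝ} {K : ℝ}
    (hφ : ∀ t, HasDerivAt φ (φ' t) t) (hφ' : ∀ t ∈ Set.Ioo (0 : ℝ) 1, φ' t - φ' 0 ≤ K * t) :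
    φ 1 - φ 0 ≤ φ' 0 + K / 2 := by
  set g : ℝ → ℝ := fun t => φ t - φ' 0 * t - K / 2 * t ^ 2
  have hg : ∀ t, HasDerivAt g (φ' t - φ' 0 - K * t) t := fun t => by
    refine (((hφ t).sub ((hasDerivAt_id t).const_mul (φ' 0))).sub
      ((hasDerivAt_pow 2 t).const_mul (K / 2))).congr_deriv ?_
    simp only [Nat.cast_ofNat]
    ring
  have hanti : AntitoneOn g (Set.Icc 0 1) := by
    refine antitoneOn_of_hasDerivWithinAt_nonpos (convex_Icc 0 1)
      (fun t _ => (hg t).continuousAt.continuousWithinAt)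
      (fun t _ => (hg t).hasDerivWithinAt) fun t ht => ?_
    rw [interior_Icc] at ht
    linarith [hφ' t ht]
  have := hanti (Set.left_mem_Icc.2 zero_le_one) (Set.right_mem_Icc.2 zero_le_one) zero_le_one
  simp only [g] at this
  linarith

section Descent

variable {E : Type*} [NormedAddCommGroup E] [InnerProductSpace ℝ E] [CompleteSpace E]
  {f : E → ℝ} {gf : E → E} {L : ℝ}

theorem sub_le_inner_add_sq_norm_of_gradient_lipschitz (hgf : ∀ x, HasGradientAt f (gf x) x)
    (hL : ∀ x y, ‖gf x - gf y‖ ≤ L * ‖x - y‖) (x y : E) :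
    f y - f x ≤ ⟪gf x, y - x⟫ + L / 2 * ‖y - x‖ ^ 2 := by
  set v := y - x
  have hφ : ∀ t : ℝ, HasDerivAt (fun t : ℝ => f (x + t • v)) ⟪gf (x + t • v), v⟫ t := fun t =>
    (hgf _).hasFDerivAt.comp_hasDerivAt t
      (by simpa using ((hasDerivAt_id t).smul_const v).const_add x)
  have hφ' : ∀ t ∈ Set.Ioo (0 : ℝ) 1,
      ⟪gf (x + t • v), v⟫ - ⟪gf (x + (0 : ℝ) • v), v⟫ ≤ L * ‖v‖ ^ 2 * t := by
    intro t ht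
    calc ⟪gf (x + t • v), v⟫ - ⟪gf (x + (0 : ℝ) • v), v⟫
        = ⟪gf (x + t • v) - gf x, v⟫ := by rw [zero_smul, add_zero, inner_sub_left]
      _ ≤ ‖gf (x + t • v) - gf x‖ * ‖v‖ := real_inner_le_norm _ _
      _ ≤ L * ‖x + t • v - x‖ * ‖v‖ := by gcongr; exact hL _ _
      _ = L * ‖v‖ ^ 2 * t := by
        rw [add_sub_cancel_left, norm_smul, Real.norm_of_nonneg ht.1.le]
        ring
  have := sub_le_deriv_add_half_of_deriv_sub_le hφ hφ'
  simp only [one_smul, zero_smul, add_zero, add_sub_cancel, v] at this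
  linarith

theorem sub_le_inner_add_of_retraction_bounds (hgf : ∀ x, HasGradientAt f (gf x) x)
    (hL : ∀ x y, ‖gf x - gf y‖ ≤ L * ‖x - y‖) (hL₀ : 0 ≤ L) {x y η : E} {M₁ M₂ G : ℝ}
    (h₁ : ‖y - x‖ ≤ M₁ * ‖η‖) (h₂ : ‖y - (x + η)‖ ≤ M₂ * ‖η‖ ^ 2) (hG : ‖gf x‖ ≤ G) :
    f y - f x ≤ ⟪gf x, η⟫ + (M₂ * G + L * M₁ ^ 2 / 2) * ‖η‖ ^ 2 := by
  have hinner : ⟪gf x, y - x⟫ ≤ ⟪gf x, η⟫ + G * (M₂ * ‖η‖ ^ 2) :=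
    calc ⟪gf x, y - x⟫ = ⟪gf x, η⟫ + ⟪gf x, y - (x + η)⟫ := by
          rw [← inner_add_right]; congr 1; abel
      _ ≤ ⟪gf x, η⟫ + ‖gf x‖ * ‖y - (x + η)‖ := by gcongr; exact real_inner_le_norm _ _
      _ ≤ ⟪gf x, η⟫ + G * (M₂ * ‖η‖ ^ 2) := by
          gcongr
          exact (norm_nonneg _).trans hG
  have hsq : ‖y - x‖ ^ 2 ≤ M₁ ^ 2 * ‖η‖ ^ 2 := by
    rw [← mul_pow]
    exact pow_le_pow_left₀ (norm_nonneg _) h₁ 2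
  calc f y - f x ≤ ⟪gf x, y - x⟫ + L / 2 * ‖y - x‖ ^ 2 :=
        sub_le_inner_add_sq_norm_of_gradient_lipschitz hgf hL x y
    _ ≤ ⟪gf x, η⟫ + G * (M₂ * ‖η‖ ^ 2) + L / 2 * (M₁ ^ 2 * ‖η‖ ^ 2) := by gcongr
    _ = ⟪gf x, η⟫ + (M₂ * G + L * M₁ ^ 2 / 2) * ‖η‖ ^ 2 := by ring

end Descent

theorem nonneg_of_norm_sub_le_mul_norm_sub {E F : Type*} [NormedAddCommGroup E] [Nontrivial E]
    [SeminormedAddCommGroup F] {g : E → F} {L : ℝ} (hL : ∀ x y, ‖g x - g y‖ ≤ L * ‖x - y‖) :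
    0 ≤ L := by
  obtain ⟨x, hx⟩ := exists_ne (0 : E)
  exact nonneg_of_mul_nonneg_left ((norm_nonneg _).trans (hL x 0))
    (norm_pos_iff.2 (sub_ne_zero.2 hx))

/-- Lipschitz-type descent inequality for the pullback of a smooth
function through a retraction. -/
theorem stmt_5 {n r : ℕ}
    (f : EuclideanSpace ℝ (Fin n × Fin r) → ℝ)
    (gf : EuclideanSpace ℝ (Fin n × Fin r) → EuclideanSpace ℝ (Fin n × Fin r))
    (hgf : ∀ x, HasGradientAt f (gf x) x)
    (L : ℝ) (hL : ∀ x y, ‖gf x - gf y‖ ≤ L * ‖x - y‖)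
    (M : Set (EuclideanSpace ℝ (Fin n × Fin r)))
    (Tang : EuclideanSpace ℝ (Fin n × Fin r) → Submodule ℝ (EuclideanSpace ℝ (Fin n × Fin r)))
    (R : EuclideanSpace ℝ (Fin n × Fin r) → EuclideanSpace ℝ (Fin n × Fin r) →
      EuclideanSpace ℝ (Fin n × Fin r))
    (M₁ M₂ G : ℝ)
    (hR1 : ∀ X ∈ M, ∀ ξ ∈ Tang X, ‖R X ξ - X‖ ≤ M₁ * ‖ξ‖)
    (hR2 : ∀ X ∈ M, ∀ ξ ∈ Tang X, ‖R X ξ - (X + ξ)‖ ≤ M₂ * ‖ξ‖ ^ 2)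
    (hG : ∀ X ∈ M, ‖gf X‖ ≤ G) :
    ∀ X ∈ M, ∀ ξ ∈ Tang X, ∀ α : ℝ, 0 < α →
      f (R X (α • ξ)) - f X ≤
        α * (inner ℝ (gf X) ξ : ℝ) + (M₂ * G + L * M₁ ^ 2 / 2) * α ^ 2 * ‖ξ‖ ^ 2 := by
  intro X hX ξ hξ α _
  -- On a nontrivial space the Lipschitz bound forces `0 ≤ L`.
  rcases subsingleton_or_nontrivial (EuclideanSpace ℝ (Fin n × Fin r)) with _ | _
  · rw [Subsingleton.elim (R X (α • ξ)) X, Subsingleton.elim ξ 0]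
    simp
  have hαξ : α • ξ ∈ Tang X := (Tang X).smul_mem α hξ
  calc f (R X (α • ξ)) - f X
      ≤ ⟪gf X, α • ξ⟫ + (M₂ * G + L * M₁ ^ 2 / 2) * ‖α • ξ‖ ^ 2 :=
        sub_le_inner_add_of_retraction_bounds hgf hL (nonneg_of_norm_sub_le_mul_norm_sub hL)
          (hR1 X hX _ hαξ) (hR2 X hX _ hαξ) (hG X hX)
    _ = α * ⟪gf X, ξ⟫ + (M₂ * G + L * M₁ ^ 2 / 2) * α ^ 2 * ‖ξ‖ ^ 2 := by
        rw [real_inner_smul_right, norm_smul, mul_pow, Real.norm_eq_abs, sq_abs]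
        ring
end

section
/- Under the assumptions of the previous statement, suppose additionally that h is L_h-Lipschitz and convex, and that V is a minimizer over the tangent space T_X M of g(V) = ⟨∇f(X),V⟩ + (1/(2t))‖V‖² + h(X+V). Then for every α with 0 < α ≤ min{1, 1/(2(M₂G + LM₁²/2 + L_h M₂) t)}, one has F(R_X(αV)) − F(X) ≤ −(α/(2t))‖V‖², where F = f + h. -/
/-!
Along `Y = R_X(ξ)`, which lies within `M₁‖ξ‖` of `X` and within `M₂‖ξ‖²` of `X + ξ`, the descent
lemma for `f` and the Lipschitz bound for `h` show that `F(Y) - F(X)` exceeds the model decrease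
`⟪∇f(X), ξ⟫ + h(X + ξ) - h(X)` by at most `C‖ξ‖²`, `C = M₂G + LM₁²/2 + L_hM₂`. Since `V` minimises
the `(1/t)`-strongly convex subproblem over the subspace `T_X M ∋ 0`, the model decrease at `V` is
at most `-‖V‖²/t`, hence at most `-α‖V‖²/t` at `αV` by convexity; the step-size condition
`αC ≤ 1/(2t)` lets the error `Cα²‖V‖²` eat at most half of it.
-/

open Set Filter Topology
open scoped RealInnerProductSpace

variable {E : Type*} [NormedAddCommGroup E] [InnerProductSpace ℝ E]

theorem le_add_inner_add_sq_norm_of_lipschitz_gradient [CompleteSpace E] {f : E → ℝ}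
    {gf : E → E} (hgf : ∀ x, HasGradientAt f (gf x) x) {L : ℝ}
    (hL : ∀ x y, ‖gf x - gf y‖ ≤ L * ‖x - y‖) (x y : E) :
    f y ≤ f x + ⟪gf x, y - x⟫ + L / 2 * ‖y - x‖ ^ 2 := by
  set d := y - x
  let φ : ℝ → ℝ := fun τ => f (x + τ • d) - τ * ⟪gf x, d⟫ - L / 2 * τ ^ 2 * ‖d‖ ^ 2
  have hφ : ∀ τ, HasDerivAt φ (⟪gf (x + τ • d) - gf x, d⟫ - L * τ * ‖d‖ ^ 2) τ := by
    intro τ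
    have hline : HasDerivAt (fun τ : ℝ => x + τ • d) d τ := by
      simpa using ((hasDerivAt_id τ).smul_const d).const_add x
    have := (((hgf _).hasFDerivAt.comp_hasDerivAt τ hline).sub
      ((hasDerivAt_id τ).mul_const ⟪gf x, d⟫)).sub
      (((hasDerivAt_pow 2 τ).const_mul (L / 2)).mul_const (‖d‖ ^ 2))
    refine this.congr_deriv ?_
    rw [inner_sub_left, InnerProductSpace.toDual_apply_apply]
    ring
  have hφ_nonpos : ∀ τ ∈ interior (Ici (0 : ℝ)),
      ⟪gf (x + τ • d) - gf x, d⟫ - L * τ * ‖d‖ ^ 2 ≤ 0 := by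
    intro τ hτ
    rw [interior_Ici, mem_Ioi] at hτ
    have hgrad : ‖gf (x + τ • d) - gf x‖ ≤ L * τ * ‖d‖ := by
      simpa [norm_smul, abs_of_pos hτ, mul_assoc] using hL (x + τ • d) x
    rw [sub_nonpos]
    calc ⟪gf (x + τ • d) - gf x, d⟫ ≤ ‖gf (x + τ • d) - gf x‖ * ‖d‖ := real_inner_le_norm _ _
      _ ≤ L * τ * ‖d‖ * ‖d‖ := by gcongr
      _ = L * τ * ‖d‖ ^ 2 := by ring
  have hanti : AntitoneOn φ (Ici 0) :=
    antitoneOn_of_hasDerivWithinAt_nonpos (convex_Ici 0)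
      (fun τ _ => (hφ τ).continuousAt.continuousWithinAt)
      (fun τ _ => (hφ τ).hasDerivWithinAt) hφ_nonpos
  have h10 : φ 1 ≤ φ 0 := hanti self_mem_Ici (mem_Ici.2 zero_le_one) zero_le_one
  simp only [φ, d, one_smul, zero_smul, add_zero, add_sub_cancel] at h10
  linarith

theorem add_le_inner_add_add_sq_norm [CompleteSpace E] {f h : E → ℝ} {gf : E → E}
    (hgf : ∀ x, HasGradientAt f (gf x) x) {L : ℝ} (hL0 : 0 ≤ L)
    (hL : ∀ x y, ‖gf x - gf y‖ ≤ L * ‖x - y‖) {Lh : ℝ} (hLh0 : 0 ≤ Lh)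
    (hLh : ∀ x y, |h x - h y| ≤ Lh * ‖x - y‖) {M₁ M₂ G : ℝ} {X ξ Y : E}
    (hY₁ : ‖Y - X‖ ≤ M₁ * ‖ξ‖) (hY₂ : ‖Y - (X + ξ)‖ ≤ M₂ * ‖ξ‖ ^ 2) (hG : ‖gf X‖ ≤ G) :
    f Y + h Y ≤ f X + ⟪gf X, ξ⟫ + h (X + ξ) + (M₂ * G + L * M₁ ^ 2 / 2 + Lh * M₂) * ‖ξ‖ ^ 2 := by
  have hf := le_add_inner_add_sq_norm_of_lipschitz_gradient hgf hL X Y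
  have hinner : ⟪gf X, Y - X⟫ ≤ ⟪gf X, ξ⟫ + G * (M₂ * ‖ξ‖ ^ 2) :=
    calc ⟪gf X, Y - X⟫ = ⟪gf X, ξ⟫ + ⟪gf X, Y - (X + ξ)⟫ := by
          rw [← inner_add_right]; congr 1; abel
      _ ≤ ⟪gf X, ξ⟫ + ‖gf X‖ * ‖Y - (X + ξ)‖ := by gcongr; exact real_inner_le_norm _ _
      _ ≤ ⟪gf X, ξ⟫ + G * (M₂ * ‖ξ‖ ^ 2) := by gcongr; exact (norm_nonneg _).trans hG
  have hquad : L / 2 * ‖Y - X‖ ^ 2 ≤ L / 2 * (M₁ * ‖ξ‖) ^ 2 := by gcongr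
  have hLip : h Y ≤ h (X + ξ) + Lh * (M₂ * ‖ξ‖ ^ 2) :=
    calc h Y ≤ h (X + ξ) + Lh * ‖Y - (X + ξ)‖ := by linarith [(abs_le.1 (hLh Y (X + ξ))).2]
      _ ≤ h (X + ξ) + Lh * (M₂ * ‖ξ‖ ^ 2) := by gcongr
  linarith

theorem ConvexOn.add_sq_norm_growth_of_isMinOn {K : Set E} {φ : E → ℝ} (hφ : ConvexOn ℝ K φ)
    {c : ℝ} {V W : E} (hmin : IsMinOn (fun W => φ W + c * ‖W‖ ^ 2) K V) (hV : V ∈ K)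
    (hW : W ∈ K) : φ V + c * ‖V‖ ^ 2 + c * ‖W - V‖ ^ 2 ≤ φ W + c * ‖W‖ ^ 2 := by
  set δ := φ W - φ V + 2 * c * ⟪V, W - V⟫
  have hsegment : ∀ s ∈ Ioc (0 : ℝ) 1, 0 ≤ δ + s * (c * ‖W - V‖ ^ 2) := by
    rintro s ⟨hs0, hs1⟩
    have hmem : (1 - s) • V + s • W ∈ K := hφ.1 hV hW (by linarith) hs0.le (by ring)
    have hconv := hφ.2 hV hW (by linarith : 0 ≤ 1 - s) hs0.le (by ring)
    have hle := isMinOn_iff.1 hmin _ hmem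
    have hpt : (1 - s) • V + s • W = V + s • (W - V) := by module
    have hnorm : ‖V + s • (W - V)‖ ^ 2
        = ‖V‖ ^ 2 + 2 * s * ⟪V, W - V⟫ + s ^ 2 * ‖W - V‖ ^ 2 := by
      rw [norm_add_sq_real, inner_smul_right, norm_smul, mul_pow, Real.norm_eq_abs, sq_abs]
      ring
    simp only [hpt, smul_eq_mul] at hconv hle
    rw [hnorm] at hle
    have : 0 ≤ s * (δ + s * (c * ‖W - V‖ ^ 2)) := by linarith
    exact nonneg_of_mul_nonneg_right this hs0
  -- `hsegment` is first-order optimality along `[V, W]` divided by `s`; let `s → 0⁺`.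
  have hδ : 0 ≤ δ := by
    have hcont : Continuous fun s : ℝ => δ + s * (c * ‖W - V‖ ^ 2) := by fun_prop
    have hlim : Tendsto (fun s => δ + s * (c * ‖W - V‖ ^ 2)) (𝓝[>] 0) (𝓝 δ) := by
      simpa using (hcont.tendsto 0).mono_left nhdsWithin_le_nhds
    exact ge_of_tendsto hlim (eventually_of_mem (Ioc_mem_nhdsGT zero_lt_one) hsegment)
  have hW_sq : ‖W‖ ^ 2 = ‖V‖ ^ 2 + 2 * ⟪V, W - V⟫ + ‖W - V‖ ^ 2 := by
    rw [← norm_add_sq_real, add_sub_cancel]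
  rw [hW_sq]
  linarith

theorem ConvexOn.apply_smul_le_of_isMinOn_add_sq_norm {K : Set E} {φ : E → ℝ}
    (hφ : ConvexOn ℝ K φ) (hK : (0 : E) ∈ K) {c : ℝ} {V : E}
    (hmin : IsMinOn (fun W => φ W + c * ‖W‖ ^ 2) K V) (hV : V ∈ K) {α : ℝ} (hα0 : 0 ≤ α)
    (hα1 : α ≤ 1) : φ (α • V) ≤ φ 0 - 2 * c * α * ‖V‖ ^ 2 := by
  have hgrowth := hφ.add_sq_norm_growth_of_isMinOn hmin hV hK
  rw [zero_sub, norm_neg, norm_zero] at hgrowth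
  have hconv : φ (α • V) ≤ (1 - α) * φ 0 + α * φ V := by
    simpa using hφ.2 hK hV (by linarith) hα0 (by ring)
  nlinarith

theorem mul_le_one_div_two_mul_of_le_one_div {α C t : ℝ} (ht : 0 < t) (hα : 0 ≤ α)
    (hαC : α ≤ 1 / (2 * C * t)) : α * C ≤ 1 / (2 * t) := by
  rcases le_or_gt C 0 with hC | hC
  · exact (mul_nonpos_of_nonneg_of_nonpos hα hC).trans (by positivity)
  · rw [le_div_iff₀ (by positivity)] at hαC
    rw [le_div_iff₀ (by positivity)]
    linarith

theorem stmt_6_general {n r : ℕ}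
    (f h : EuclideanSpace ℝ (Fin n × Fin r) → ℝ)
    (gf : EuclideanSpace ℝ (Fin n × Fin r) → EuclideanSpace ℝ (Fin n × Fin r))
    (hgf : ∀ x, HasGradientAt f (gf x) x)
    (L : ℝ) (hL0 : 0 < L) (hL : ∀ x y, ‖gf x - gf y‖ ≤ L * ‖x - y‖)
    (Lh : ℝ) (hLh0 : 0 < Lh) (hLh : ∀ x y, |h x - h y| ≤ Lh * ‖x - y‖)
    (hh : ConvexOn ℝ Set.univ h)
    (M : Set (EuclideanSpace ℝ (Fin n × Fin r)))
    (Tang : EuclideanSpace ℝ (Fin n × Fin r) → Submodule ℝ (EuclideanSpace ℝ (Fin n × Fin r)))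
    (R : EuclideanSpace ℝ (Fin n × Fin r) → EuclideanSpace ℝ (Fin n × Fin r) →
      EuclideanSpace ℝ (Fin n × Fin r))
    (M₁ M₂ G : ℝ)
    (hR1 : ∀ X ∈ M, ∀ ξ ∈ Tang X, ‖R X ξ - X‖ ≤ M₁ * ‖ξ‖)
    (hR2 : ∀ X ∈ M, ∀ ξ ∈ Tang X, ‖R X ξ - (X + ξ)‖ ≤ M₂ * ‖ξ‖ ^ 2)
    (hG : ∀ X ∈ M, ‖gf X‖ ≤ G)
    (t : ℝ) (ht : 0 < t)
    (X : EuclideanSpace ℝ (Fin n × Fin r)) (hX : X ∈ M)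
    (g : EuclideanSpace ℝ (Fin n × Fin r) → ℝ)
    (hg : ∀ W, g W = (inner ℝ (gf X) W : ℝ) + (1 / (2 * t)) * ‖W‖ ^ 2 + h (X + W))
    (V : EuclideanSpace ℝ (Fin n × Fin r)) (hVT : V ∈ Tang X)
    (hmin : ∀ W ∈ Tang X, g V ≤ g W) :
    ∀ α : ℝ, 0 < α →
      α ≤ min 1 (1 / (2 * (M₂ * G + L * M₁ ^ 2 / 2 + Lh * M₂) * t)) →
      (f (R X (α • V)) + h (R X (α • V))) - (f X + h X) ≤ -(α / (2 * t)) * ‖V‖ ^ 2 := by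
  intro α hα hαle
  set C := M₂ * G + L * M₁ ^ 2 / 2 + Lh * M₂ with hC
  have hαC : α * C ≤ 1 / (2 * t) :=
    mul_le_one_div_two_mul_of_le_one_div ht hα.le (hαle.trans (min_le_right _ _))
  set φ := fun W => ⟪gf X, W⟫ + h (X + W)
  have hφ : ConvexOn ℝ (Tang X) φ :=
    ((innerₛₗ ℝ (gf X)).convexOn (Tang X).convex).add
      ((hh.translate_right X).subset (subset_univ _) (Tang X).convex)
  have hVmin : IsMinOn (fun W => φ W + 1 / (2 * t) * ‖W‖ ^ 2) (Tang X) V :=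
    isMinOn_iff.2 fun W hW => by simpa only [φ, hg, add_right_comm] using hmin W hW
  have hdecrease := hφ.apply_smul_le_of_isMinOn_add_sq_norm (Tang X).zero_mem hVmin hVT hα.le
    (hαle.trans (min_le_left _ _))
  have hφ0 : φ 0 = h X := by simp [φ]
  have hφα : φ (α • V) = ⟪gf X, α • V⟫ + h (X + α • V) := rfl
  have hmodel := add_le_inner_add_add_sq_norm hgf hL0.le hL hLh0.le hLh
    (hR1 X hX _ ((Tang X).smul_mem α hVT)) (hR2 X hX _ ((Tang X).smul_mem α hVT)) (hG X hX)
  rw [← hC, norm_smul, Real.norm_eq_abs, abs_of_pos hα] at hmodel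
  calc f (R X (α • V)) + h (R X (α • V)) - (f X + h X)
      ≤ -(2 * (1 / (2 * t)) * α * ‖V‖ ^ 2) + α * (α * C) * ‖V‖ ^ 2 := by linarith
    _ ≤ -(2 * (1 / (2 * t)) * α * ‖V‖ ^ 2) + α * (1 / (2 * t)) * ‖V‖ ^ 2 := by gcongr
    _ = -(α / (2 * t)) * ‖V‖ ^ 2 := by field_simp; ring

/-- sufficient decrease of `F = f + h` along the retracted direction
`V` obtained from the proximal-gradient subproblem. -/
theorem stmt_6 {n r : ℕ}
    (f h : EuclideanSpace ℝ (Fin n × Fin r) → ℝ)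
    (gf : EuclideanSpace ℝ (Fin n × Fin r) → EuclideanSpace ℝ (Fin n × Fin r))
    (hgf : ∀ x, HasGradientAt f (gf x) x)
    (L : ℝ) (hL0 : 0 < L) (hL : ∀ x y, ‖gf x - gf y‖ ≤ L * ‖x - y‖)
    (Lh : ℝ) (hLh0 : 0 < Lh) (hLh : ∀ x y, |h x - h y| ≤ Lh * ‖x - y‖)
    (hh : ConvexOn ℝ Set.univ h)
    (M : Set (EuclideanSpace ℝ (Fin n × Fin r)))
    (Tang : EuclideanSpace ℝ (Fin n × Fin r) → Submodule ℝ (EuclideanSpace ℝ (Fin n × Fin r)))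
    (R : EuclideanSpace ℝ (Fin n × Fin r) → EuclideanSpace ℝ (Fin n × Fin r) →
      EuclideanSpace ℝ (Fin n × Fin r))
    (M₁ M₂ G : ℝ) (hM₁ : 0 < M₁) (hM₂ : 0 < M₂) (hG0 : 0 < G)
    (hR1 : ∀ X ∈ M, ∀ ξ ∈ Tang X, ‖R X ξ - X‖ ≤ M₁ * ‖ξ‖)
    (hR2 : ∀ X ∈ M, ∀ ξ ∈ Tang X, ‖R X ξ - (X + ξ)‖ ≤ M₂ * ‖ξ‖ ^ 2)
    (hG : ∀ X ∈ M, ‖gf X‖ ≤ G)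
    (t : ℝ) (ht : 0 < t)
    (X : EuclideanSpace ℝ (Fin n × Fin r)) (hX : X ∈ M)
    (g : EuclideanSpace ℝ (Fin n × Fin r) → ℝ)
    (hg : ∀ W, g W = (inner ℝ (gf X) W : ℝ) + (1 / (2 * t)) * ‖W‖ ^ 2 + h (X + W))
    (V : EuclideanSpace ℝ (Fin n × Fin r)) (hVT : V ∈ Tang X)
    (hmin : ∀ W ∈ Tang X, g V ≤ g W) :
    ∀ α : ℝ, 0 < α →
      α ≤ min 1 (1 / (2 * (M₂ * G + L * M₁ ^ 2 / 2 + Lh * M₂) * t)) →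
      (f (R X (α • V)) + h (R X (α • V))) - (f X + h X) ≤ -(α / (2 * t)) * ‖V‖ ^ 2 :=
  stmt_6_general f h gf hgf L hL0 hL Lh hLh0 hLh hh M Tang R M₁ M₂ G hR1 hR2 hG t ht X hX g hg V hVT
    hmin
end

section
/- Let X ∈ St(n,r) and Y ∈ ℝ^(n×r). The orthogonal projection (with respect to the trace inner product) of Y onto the subspace T_X = {V : VᵀX + XᵀV = 0} is given by Proj_{T_X}(Y) = (I_n − XXᵀ)Y + (1/2)X(XᵀY − YᵀX). -/
open Matrix

/-- the orthogonal projection (w.r.t. the trace inner product) of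
`Y` onto the tangent space `{V : Vᵀ X + Xᵀ V = 0}` at `X ∈ St(n,r)` is
`(I - XXᵀ)Y + (1/2) X (Xᵀ Y - Yᵀ X)`: the formula lands in the tangent space and
the residual is orthogonal to every tangent vector. -/
theorem stmt_10 (n r : ℕ) (X Y : Matrix (Fin n) (Fin r) ℝ) (hX : Xᵀ * X = 1)
    (P : Matrix (Fin n) (Fin r) ℝ)
    (hP : P = (1 - X * Xᵀ) * Y + (1 / 2 : ℝ) • (X * (Xᵀ * Y - Yᵀ * X))) :
    Pᵀ * X + Xᵀ * P = 0 ∧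
    ∀ V : Matrix (Fin n) (Fin r) ℝ, Vᵀ * X + Xᵀ * V = 0 →
      Matrix.trace ((Y - P)ᵀ * V) = 0 := by
  have hcan : ∀ M : Matrix (Fin r) (Fin r) ℝ, Xᵀ * (X * M) = M := by
    intro M; rw [← Matrix.mul_assoc, hX, Matrix.one_mul]
  have hdiff : Y - P = X * ((1/2 : ℝ) • (Xᵀ * Y + Yᵀ * X)) := by
    subst hP
    simp only [Matrix.sub_mul, Matrix.mul_sub, Matrix.mul_add, Matrix.add_mul,
      Matrix.one_mul, Matrix.mul_smul, Matrix.smul_mul, Matrix.mul_assoc]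
    ext i j
    simp only [Matrix.sub_apply, Matrix.add_apply, Matrix.smul_apply, smul_eq_mul]
    ring
  constructor
  · subst hP
    simp only [Matrix.transpose_add, Matrix.transpose_sub, Matrix.transpose_mul,
      Matrix.transpose_smul, Matrix.transpose_one, Matrix.transpose_transpose,
      Matrix.add_mul, Matrix.sub_mul, Matrix.mul_add, Matrix.mul_sub,
      Matrix.smul_mul, Matrix.mul_smul, Matrix.one_mul, Matrix.mul_one,
      Matrix.mul_assoc, hX, hcan]
    ext i j
    simp only [Matrix.add_apply, Matrix.sub_apply, Matrix.smul_apply,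
      Matrix.zero_apply, smul_eq_mul]
    ring
  · intro V hV
    have hXV : Xᵀ * V = -(Vᵀ * X) := by
      rw [eq_neg_iff_add_eq_zero, add_comm]; exact hV
    set S := (1/2 : ℝ) • (Xᵀ * Y + Yᵀ * X) with hSdef
    have hS : Sᵀ = S := by
      rw [hSdef]
      simp [Matrix.transpose_smul, Matrix.transpose_add, Matrix.transpose_mul, add_comm]
    have key : Matrix.trace (S * (Vᵀ * X)) = - Matrix.trace (S * (Vᵀ * X)) := by
      calc Matrix.trace (S * (Vᵀ * X)) = Matrix.trace ((S * (Vᵀ * X))ᵀ) :=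
            (Matrix.trace_transpose _).symm
        _ = Matrix.trace (Xᵀ * V * S) := by
            rw [Matrix.transpose_mul, hS, Matrix.transpose_mul, Matrix.transpose_transpose]
        _ = - Matrix.trace (S * (Vᵀ * X)) := by
            rw [hXV, Matrix.neg_mul, Matrix.trace_neg, Matrix.trace_mul_comm]
    have key0 : Matrix.trace (S * (Vᵀ * X)) = 0 := by linarith
    rw [hdiff, Matrix.transpose_mul, hS, Matrix.mul_assoc, hXV, Matrix.mul_neg,
      Matrix.trace_neg, key0, neg_zero]
end

section
/- Let X ∈ St(n,r) and V ∈ T_X St(n,r), and consider X⁺ = X + αV for α > 0. If W ∈ St(n,r) is any point, then ‖W − X⁺‖ ≥ dist of X⁺ to the Stiefel manifold, and in particular for the polar retraction R_X(αV) = (X+αV)(I_r + α²VᵀV)^{−1/2} one has ‖R_X(αV) − (X+αV)‖² = Σᵢ (√(1+α²σᵢ²) − 1)², where σᵢ are the singular values of V; consequently ‖R_X(αV) − (X+αV)‖ ≤ (α²/2)‖V‖². -/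
/-!
Because `V` is tangent at `X`, `X⁺ = X + αV` has Gram matrix `X⁺ᵀX⁺ = I + α²VᵀV = S²`, so
`R - X⁺ = X⁺(S⁻¹ - I)` has the same Gram matrix as `S - I`, hence the same Frobenius norm.
Diagonalising `VᵀV = QΣ²Qᵀ` identifies the positive square root `S = Q diag(√(1 + α²σᵢ²)) Qᵀ`,
which gives the exact error; the bound follows from `√(1 + s) - 1 ≤ s / 2` and
`∑ aᵢ² ≤ (∑ aᵢ)²` for `aᵢ ≥ 0`.
-/

open Matrix

attribute [local instance] Matrix.frobeniusNormedAddCommGroup Matrix.frobeniusNormedSpace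

open Real Finset

namespace Matrix

section Orthogonal

variable {n R : Type*} [Fintype n] [DecidableEq n] [CommRing R] {Q : Matrix n n R}

theorem trace_mul_mul_transpose_of_orthogonal (hQ : Qᵀ * Q = 1) (A : Matrix n n R) :
    (Q * A * Qᵀ).trace = A.trace := by
  rw [trace_mul_comm, ← Matrix.mul_assoc, hQ, Matrix.one_mul]

theorem mul_mul_transpose_mul_of_orthogonal (hQ : Qᵀ * Q = 1) (A B : Matrix n n R) :
    Q * A * Qᵀ * (Q * B * Qᵀ) = Q * (A * B) * Qᵀ := by
  simp only [Matrix.mul_assoc]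
  rw [← Matrix.mul_assoc Qᵀ, hQ, Matrix.one_mul]

theorem one_add_smul_mul_diagonal_mul_transpose (hQ : Qᵀ * Q = 1) (c : R) (d : n → R) :
    1 + c • (Q * diagonal d * Qᵀ) = Q * diagonal (fun i => 1 + c * d i) * Qᵀ := by
  rw [show diagonal (fun i => 1 + c * d i) = 1 + c • diagonal d by
      rw [← diagonal_one, ← diagonal_smul, diagonal_add]; rfl,
    Matrix.mul_add, Matrix.add_mul, Matrix.mul_one, mul_eq_one_comm.mp hQ, Matrix.mul_smul,
    Matrix.smul_mul]

theorem mul_diagonal_mul_transpose_sub_one (hQ : Qᵀ * Q = 1) (d : n → R) :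
    Q * diagonal d * Qᵀ - 1 = Q * diagonal (fun i => d i - 1) * Qᵀ := by
  rw [show diagonal (fun i => d i - 1) = diagonal d - 1 by rw [← diagonal_one, diagonal_sub],
    Matrix.mul_sub, Matrix.sub_mul, Matrix.mul_one, mul_eq_one_comm.mp hQ]

end Orthogonal

theorem eq_mul_diagonal_sqrt_mul_transpose {n : Type*} [Fintype n] [DecidableEq n]
    {S Q : Matrix n n ℝ} {d : n → ℝ} (hS : S.PosSemidef) (hQ : Qᵀ * Q = 1) (hd : ∀ i, 0 ≤ d i)
    (hSS : S * S = Q * diagonal d * Qᵀ) :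
    S = Q * diagonal (fun i => √(d i)) * Qᵀ := by
  have hroot : (Q * diagonal (fun i => √(d i)) * Qᵀ).PosSemidef := by
    simpa only [conjTranspose_eq_transpose_of_trivial] using
      (posSemidef_diagonal_iff.mpr fun i => sqrt_nonneg (d i)).mul_mul_conjTranspose_same Q
  have hsq : (Q * diagonal (fun i => √(d i)) * Qᵀ) ^ 2 = S ^ 2 := by
    rw [sq, sq, hSS, mul_mul_transpose_mul_of_orthogonal hQ, diagonal_mul_diagonal]
    simp only [mul_self_sqrt (hd _)]
  open scoped MatrixOrder in
  exact (CFC.sq_eq_sq_iff _ _ hroot.nonneg hS.nonneg).mp hsq |>.symm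

theorem transpose_mul_self_of_tangent {m n R : Type*} [Fintype m] [Fintype n] [DecidableEq n]
    [CommRing R] {X V : Matrix m n R} (hX : Xᵀ * X = 1) (hV : Vᵀ * X + Xᵀ * V = 0) (α : R) :
    (X + α • V)ᵀ * (X + α • V) = 1 + α ^ 2 • (Vᵀ * V) :=
  calc (X + α • V)ᵀ * (X + α • V) = Xᵀ * X + α • (Vᵀ * X + Xᵀ * V) + α ^ 2 • (Vᵀ * V) := by
        simp only [transpose_add, transpose_smul, Matrix.add_mul, Matrix.mul_add, Matrix.smul_mul,
          Matrix.mul_smul, smul_add, smul_smul, sq]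
        abel
    _ = 1 + α ^ 2 • (Vᵀ * V) := by rw [hX, hV, smul_zero, add_zero]

theorem transpose_mul_self_mul_inv_sub_self {m n R : Type*} [Fintype m] [Fintype n]
    [DecidableEq n] [CommRing R] {Y : Matrix m n R} {S : Matrix n n R} (hS : Sᵀ = S)
    (hdet : IsUnit S.det) (hY : Yᵀ * Y = S * S) :
    (Y * S⁻¹ - Y)ᵀ * (Y * S⁻¹ - Y) = (S - 1)ᵀ * (S - 1) :=
  calc (Y * S⁻¹ - Y)ᵀ * (Y * S⁻¹ - Y) = (S⁻¹ - 1) * (Yᵀ * Y) * (S⁻¹ - 1) := by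
        rw [show Y * S⁻¹ - Y = Y * (S⁻¹ - 1) by rw [Matrix.mul_sub, Matrix.mul_one],
          transpose_mul, transpose_sub, transpose_nonsing_inv, hS, transpose_one,
          Matrix.mul_assoc, Matrix.mul_assoc, Matrix.mul_assoc]
    _ = ((S⁻¹ - 1) * S) * (S * (S⁻¹ - 1)) := by rw [hY]; simp only [Matrix.mul_assoc]
    _ = (S - 1)ᵀ * (S - 1) := by
        rw [Matrix.sub_mul, nonsing_inv_mul S hdet, Matrix.mul_sub, mul_nonsing_inv S hdet,
          transpose_sub, hS, transpose_one]
        noncomm_ring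

section Frobenius

variable {m n : Type*} [Fintype m] [Fintype n]

theorem frobenius_norm_sq_eq_trace (A : Matrix m n ℝ) : ‖A‖ ^ 2 = (Aᵀ * A).trace := by
  rw [frobenius_norm_def, ← rpow_natCast, ← rpow_mul (by positivity), trace, sum_comm]
  norm_num [Matrix.mul_apply, sq]

theorem frobenius_norm_eq_of_transpose_mul_self_eq {m' : Type*} [Fintype m']
    {A : Matrix m n ℝ} {B : Matrix m' n ℝ} (h : Aᵀ * A = Bᵀ * B) : ‖A‖ = ‖B‖ := by
  rw [← sq_eq_sq₀ (norm_nonneg _) (norm_nonneg _), frobenius_norm_sq_eq_trace,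
    frobenius_norm_sq_eq_trace, h]

variable [DecidableEq n]

theorem frobenius_norm_mul_mul_transpose_of_orthogonal {Q : Matrix n n ℝ} (hQ : Qᵀ * Q = 1)
    (A : Matrix n n ℝ) : ‖Q * A * Qᵀ‖ = ‖A‖ := by
  have hT : (Q * A * Qᵀ)ᵀ = Q * Aᵀ * Qᵀ := by
    rw [transpose_mul, transpose_mul, transpose_transpose, Matrix.mul_assoc]
  rw [← sq_eq_sq₀ (norm_nonneg _) (norm_nonneg _), frobenius_norm_sq_eq_trace,
    frobenius_norm_sq_eq_trace, hT, mul_mul_transpose_mul_of_orthogonal hQ,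
    trace_mul_mul_transpose_of_orthogonal hQ]

theorem frobenius_norm_sq_diagonal (d : n → ℝ) : ‖diagonal d‖ ^ 2 = ∑ i, d i ^ 2 := by
  rw [frobenius_norm_diagonal, EuclideanSpace.norm_sq_eq]
  simp

end Frobenius

end Matrix

theorem sum_sq_sqrt_one_add_sub_one_le {ι : Type*} (t : Finset ι) (s : ι → ℝ)
    (hs : ∀ i ∈ t, 0 ≤ s i) : ∑ i ∈ t, (√(1 + s i) - 1) ^ 2 ≤ (∑ i ∈ t, s i / 2) ^ 2 :=
  calc ∑ i ∈ t, (√(1 + s i) - 1) ^ 2 ≤ ∑ i ∈ t, (s i / 2) ^ 2 := by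
        refine sum_le_sum fun i hi => pow_le_pow_left₀ ?_ ?_ 2
        · linarith [one_le_sqrt.mpr (le_add_of_nonneg_right (hs i hi))]
        · linarith [sqrt_one_add_le (by linarith [hs i hi] : -1 ≤ s i)]
    _ ≤ (∑ i ∈ t, s i / 2) ^ 2 := sum_sq_le_sq_sum_of_nonneg fun i hi => by linarith [hs i hi]

theorem stmt_12_general (n r : ℕ) (X V : Matrix (Fin n) (Fin r) ℝ)
    (hX : Xᵀ * X = 1) (hV : Vᵀ * X + Xᵀ * V = 0)
    (α : ℝ)
    (σ : Fin r → ℝ)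
    (Q : Matrix (Fin r) (Fin r) ℝ) (hQ : Qᵀ * Q = 1)
    (hdiag : Vᵀ * V = Q * Matrix.diagonal (fun i => σ i ^ 2) * Qᵀ)
    (S : Matrix (Fin r) (Fin r) ℝ) (hS : S.PosDef)
    (hSsq : S * S = 1 + (α ^ 2) • (Vᵀ * V))
    (Xp R : Matrix (Fin n) (Fin r) ℝ)
    (hXp : Xp = X + α • V) (hR : R = Xp * S⁻¹) :
    (∀ W : Matrix (Fin n) (Fin r) ℝ, Wᵀ * W = 1 →
        ‖W - Xp‖ ≥ Metric.infDist Xp {Y : Matrix (Fin n) (Fin r) ℝ | Yᵀ * Y = 1}) ∧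
    ‖R - Xp‖ ^ 2 = ∑ i : Fin r, (Real.sqrt (1 + α ^ 2 * σ i ^ 2) - 1) ^ 2 ∧
    ‖R - Xp‖ ≤ (α ^ 2 / 2) * ‖V‖ ^ 2 := by
  have hSsymm : Sᵀ = S := by simpa using hS.isHermitian.eq
  have hXpXp : Xpᵀ * Xp = S * S := by rw [hXp, hSsq, transpose_mul_self_of_tangent hX hV]
  have hSroot : S = Q * diagonal (fun i => √(1 + α ^ 2 * σ i ^ 2)) * Qᵀ :=
    eq_mul_diagonal_sqrt_mul_transpose hS.posSemidef hQ (fun i => by positivity)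
      (by rw [hSsq, hdiag, one_add_smul_mul_diagonal_mul_transpose hQ])
  have hSdet : IsUnit S.det := isUnit_iff_ne_zero.mpr hS.det_pos.ne'
  have hval : ‖R - Xp‖ ^ 2 = ∑ i, (√(1 + α ^ 2 * σ i ^ 2) - 1) ^ 2 := by
    rw [hR, frobenius_norm_eq_of_transpose_mul_self_eq
        (transpose_mul_self_mul_inv_sub_self hSsymm hSdet hXpXp),
      hSroot, mul_diagonal_mul_transpose_sub_one hQ,
      frobenius_norm_mul_mul_transpose_of_orthogonal hQ, frobenius_norm_sq_diagonal]
  have hVnorm : ‖V‖ ^ 2 = ∑ i, σ i ^ 2 := by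
    rw [frobenius_norm_sq_eq_trace, hdiag, trace_mul_mul_transpose_of_orthogonal hQ,
      trace_diagonal]
  refine ⟨fun W hW => ?_, hval, ?_⟩
  · rw [ge_iff_le, norm_sub_rev, ← dist_eq_norm]
    exact Metric.infDist_le_dist_of_mem hW
  · refine le_of_pow_le_pow_left₀ two_ne_zero (by positivity) ?_
    rw [hval, hVnorm, mul_sum]
    refine (sum_sq_sqrt_one_add_sub_one_le univ (fun i => α ^ 2 * σ i ^ 2)
      fun i _ => by positivity).trans_eq ?_
    simp only [mul_div_right_comm]

/-- distance from `X⁺ = X + αV` to the Stiefel manifold, exact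
expression for the polar-retraction error in terms of the singular values of
`V`, and the bound `‖R_X(αV) - (X+αV)‖ ≤ (α²/2)‖V‖²` (Frobenius norm). -/
theorem stmt_12 (n r : ℕ) (X V : Matrix (Fin n) (Fin r) ℝ)
    (hX : Xᵀ * X = 1) (hV : Vᵀ * X + Xᵀ * V = 0)
    (α : ℝ) (hα : 0 < α)
    (σ : Fin r → ℝ) (hσ : ∀ i, 0 ≤ σ i)
    (Q : Matrix (Fin r) (Fin r) ℝ) (hQ : Qᵀ * Q = 1)
    (hdiag : Vᵀ * V = Q * Matrix.diagonal (fun i => σ i ^ 2) * Qᵀ)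
    (S : Matrix (Fin r) (Fin r) ℝ) (hS : S.PosDef)
    (hSsq : S * S = 1 + (α ^ 2) • (Vᵀ * V))
    (Xp R : Matrix (Fin n) (Fin r) ℝ)
    (hXp : Xp = X + α • V) (hR : R = Xp * S⁻¹) :
    (∀ W : Matrix (Fin n) (Fin r) ℝ, Wᵀ * W = 1 →
        ‖W - Xp‖ ≥ Metric.infDist Xp {Y : Matrix (Fin n) (Fin r) ℝ | Yᵀ * Y = 1}) ∧
    ‖R - Xp‖ ^ 2 = ∑ i : Fin r, (Real.sqrt (1 + α ^ 2 * σ i ^ 2) - 1) ^ 2 ∧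
    ‖R - Xp‖ ≤ (α ^ 2 / 2) * ‖V‖ ^ 2 :=
  stmt_12_general n r X V hX hV α σ Q hQ hdiag S hS hSsq Xp R hXp hR
end

section
/- Let f be differentiable, h convex, t > 0, X in an embedded submanifold M with tangent space T_X M (a linear subspace). If V = 0 is a minimizer over T_X M of g(V) = ⟨∇f(X), V⟩ + (1/(2t))‖V‖² + h(X+V), then 0 ∈ Proj_{T_X M}(∇f(X) + ∂h(X)), i.e., there exists ξ ∈ ∂h(X) with Proj_{T_X M}(∇f(X) + ξ) = 0. -/
/-!
Testing `hmin` on `s • W` for `W ∈ T` and letting `s → 0⁺` (convexity bounds the difference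
quotient of `h` by its value at `s = 1`) shows that `W ↦ -⟪c, W⟫` is dominated on `T` by
`W ↦ h (X + W) - h X`, hence by the directional derivative `h'(X; ·)`. The latter is sublinear,
so Hahn–Banach extends `-⟪c, ·⟫` from `T` to a functional `⟪ξ, ·⟫ ≤ h'(X; ·) ≤ h (X + ·) - h X`:
`ξ` is a subgradient of `h` at `X` and `c + ξ ⊥ T`.
-/

open Set InnerProductSpace Filter Topology

section DirectionalDerivative

variable {E : Type*} [AddCommGroup E] [Module ℝ E]

/-- For convex `k` the difference quotients are monotone in `s`, so this infimum is the one-sided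
directional derivative `k'(x; V)`. -/
noncomputable def convexDirDeriv (k : E → ℝ) (x V : E) : ℝ :=
  ⨅ s : Ioi (0 : ℝ), (k (x + (s : ℝ) • V) - k x) / s

variable {k : E → ℝ}

lemma ConvexOn.sub_le_diffQuot (hk : ConvexOn ℝ univ k) (x V : E) {s : ℝ} (hs : 0 < s) :
    k x - k (x - V) ≤ (k (x + s • V) - k x) / s := by
  have hconv := hk.2 (mem_univ (x + s • V)) (mem_univ (x - V))
    (by positivity : (0 : ℝ) ≤ 1 / (1 + s)) (by positivity : (0 : ℝ) ≤ s / (1 + s))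
    (by field_simp)
  have hx : (1 / (1 + s)) • (x + s • V) + (s / (1 + s)) • (x - V) = x := by
    match_scalars <;> field_simp; ring
  rw [hx, smul_eq_mul, smul_eq_mul] at hconv
  rw [le_div_iff₀ hs]
  have := mul_le_mul_of_nonneg_left hconv (by positivity : (0 : ℝ) ≤ 1 + s)
  field_simp at this
  linarith

lemma ConvexOn.bddBelow_diffQuot (hk : ConvexOn ℝ univ k) (x V : E) :
    BddBelow (range fun s : Ioi (0 : ℝ) => (k (x + (s : ℝ) • V) - k x) / s) :=
  ⟨k x - k (x - V), by rintro _ ⟨s, rfl⟩; exact hk.sub_le_diffQuot x V s.2⟩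

lemma ConvexOn.convexDirDeriv_le (hk : ConvexOn ℝ univ k) (x V : E) {s : ℝ} (hs : 0 < s) :
    convexDirDeriv k x V ≤ (k (x + s • V) - k x) / s :=
  ciInf_le (hk.bddBelow_diffQuot x V) ⟨s, hs⟩

lemma le_convexDirDeriv {x V : E} {b : ℝ} (hb : ∀ s : ℝ, 0 < s → b ≤ (k (x + s • V) - k x) / s) :
    b ≤ convexDirDeriv k x V :=
  have : Nonempty (Ioi (0 : ℝ)) := ⟨⟨1, mem_Ioi.2 one_pos⟩⟩
  le_ciInf fun s => hb s s.2

lemma ConvexOn.convexDirDeriv_le_sub (hk : ConvexOn ℝ univ k) (x V : E) :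
    convexDirDeriv k x V ≤ k (x + V) - k x := by
  simpa using hk.convexDirDeriv_le x V one_pos

lemma ConvexOn.convexDirDeriv_smul_le (hk : ConvexOn ℝ univ k) (x V : E) {c : ℝ} (hc : 0 < c) :
    convexDirDeriv k x (c • V) ≤ c * convexDirDeriv k x V := by
  rw [← div_le_iff₀' hc]
  refine le_convexDirDeriv fun s hs => ?_
  have := hk.convexDirDeriv_le x (c • V) (div_pos hs hc)
  rw [smul_smul, div_mul_cancel₀ _ hc.ne', div_div_eq_mul_div] at this
  rwa [div_le_iff₀' hc, ← mul_div_assoc, mul_comm c]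

lemma ConvexOn.convexDirDeriv_smul (hk : ConvexOn ℝ univ k) (x V : E) {c : ℝ} (hc : 0 < c) :
    convexDirDeriv k x (c • V) = c * convexDirDeriv k x V := by
  refine le_antisymm (hk.convexDirDeriv_smul_le x V hc) ?_
  have := hk.convexDirDeriv_smul_le x (c • V) (inv_pos.2 hc)
  rwa [inv_smul_smul₀ hc.ne', le_inv_mul_iff₀ hc] at this

lemma ConvexOn.convexDirDeriv_add_le_diffQuot (hk : ConvexOn ℝ univ k) (x V W : E) {s u : ℝ}
    (hs : 0 < s) (hu : 0 < u) :
    convexDirDeriv k x (V + W) ≤ (k (x + s • V) - k x) / s + (k (x + u • W) - k x) / u := by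
  set r := s * u / (s + u) with hr_def
  have hconv := hk.2 (mem_univ (x + s • V)) (mem_univ (x + u • W))
    (by positivity : (0 : ℝ) ≤ u / (s + u)) (by positivity : (0 : ℝ) ≤ s / (s + u))
    (by field_simp; ring)
  have hr : (u / (s + u)) • (x + s • V) + (s / (s + u)) • (x + u • W) = x + r • (V + W) := by
    rw [hr_def]; match_scalars <;> field_simp; ring
  rw [hr, smul_eq_mul, smul_eq_mul] at hconv
  calc convexDirDeriv k x (V + W) ≤ (k (x + r • (V + W)) - k x) / r :=
        hk.convexDirDeriv_le x _ (by positivity)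
    _ ≤ (k (x + s • V) - k x) / s + (k (x + u • W) - k x) / u := by
        rw [div_le_iff₀ (by positivity)]
        have : ((k (x + s • V) - k x) / s + (k (x + u • W) - k x) / u) * r =
            u / (s + u) * k (x + s • V) + s / (s + u) * k (x + u • W) - k x := by
          rw [hr_def]; field_simp; ring
        linarith

lemma ConvexOn.convexDirDeriv_add_le (hk : ConvexOn ℝ univ k) (x V W : E) :
    convexDirDeriv k x (V + W) ≤ convexDirDeriv k x V + convexDirDeriv k x W := by
  have hV : ∀ u : ℝ, 0 < u →
      convexDirDeriv k x (V + W) - (k (x + u • W) - k x) / u ≤ convexDirDeriv k x V :=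
    fun u hu => le_convexDirDeriv fun s hs => by
      linarith [hk.convexDirDeriv_add_le_diffQuot x V W hs hu]
  have hW : convexDirDeriv k x (V + W) - convexDirDeriv k x V ≤ convexDirDeriv k x W :=
    le_convexDirDeriv fun u hu => by linarith [hV u hu]
  linarith

lemma ConvexOn.exists_linearMap_extension_le_sub (hk : ConvexOn ℝ univ k) (x : E)
    {T : Submodule ℝ E} (ℓ : T →ₗ[ℝ] ℝ) (hℓ : ∀ W : T, ℓ W ≤ k (x + W) - k x) :
    ∃ g : E →ₗ[ℝ] ℝ, (∀ W : T, g W = ℓ W) ∧ ∀ V, g V ≤ k (x + V) - k x := by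
  have hℓN : ∀ W : T, ℓ W ≤ convexDirDeriv k x W := fun W => le_convexDirDeriv fun s hs => by
    rw [le_div_iff₀' hs, ← smul_eq_mul, ← ℓ.map_smul]
    exact hℓ (s • W)
  obtain ⟨g, hgℓ, hgN⟩ := exists_extension_of_le_sublinear ⟨T, ℓ⟩ (convexDirDeriv k x)
    (fun c hc V => hk.convexDirDeriv_smul x V hc) (hk.convexDirDeriv_add_le x) hℓN
  exact ⟨g, hgℓ, fun V => (hgN V).trans (hk.convexDirDeriv_le_sub x V)⟩

end DirectionalDerivative

section InnerProductSpace

variable {E : Type*} [NormedAddCommGroup E] [InnerProductSpace ℝ E] {k : E → ℝ}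

lemma ConvexOn.exists_subgradient_sub_mem_orthogonal [FiniteDimensional ℝ E]
    (hk : ConvexOn ℝ univ k) (x : E) (T : Submodule ℝ E) (u : E)
    (hu : ∀ W ∈ T, ⟪u, W⟫_ℝ ≤ k (x + W) - k x) :
    ∃ ξ : E, (∀ y, k x + ⟪ξ, y - x⟫_ℝ ≤ k y) ∧ ξ - u ∈ Tᗮ := by
  obtain ⟨g, hgu, hgk⟩ := hk.exists_linearMap_extension_le_sub x
    ((innerₗ E u).comp T.subtype) fun W => hu W W.2
  set ξ := (toDual ℝ E).symm (LinearMap.toContinuousLinearMap g)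
  have hξ : ∀ V, ⟪ξ, V⟫_ℝ = g V := fun V => toDual_symm_apply
  refine ⟨ξ, fun y => ?_, (Submodule.mem_orthogonal' _ _).2 fun W hW => ?_⟩
  · have := hgk (y - x)
    rw [add_sub_cancel] at this
    rw [hξ]
    linarith
  · rw [inner_sub_left, hξ, hgu ⟨W, hW⟩]
    simp

lemma ConvexOn.neg_inner_le_sub_of_forall_le_prox (hk : ConvexOn ℝ univ k) {x c W : E} (a : ℝ)
    (hmin : ∀ s : ℝ, 0 < s → s ≤ 1 → k x ≤ ⟪c, s • W⟫_ℝ + a * ‖s • W‖ ^ 2 + k (x + s • W)) :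
    -⟪c, W⟫_ℝ ≤ k (x + W) - k x := by
  have hsmall : ∀ s : ℝ, 0 < s → s ≤ 1 →
      -⟪c, W⟫_ℝ - (k (x + W) - k x) ≤ s * (a * ‖W‖ ^ 2) := by
    intro s hs hs1
    have hconv := hk.2 (mem_univ (x + W)) (mem_univ x) hs.le (sub_nonneg.2 hs1) (by ring)
    have hx : s • (x + W) + (1 - s) • x = x + s • W := by module
    rw [hx, smul_eq_mul, smul_eq_mul] at hconv
    have := hmin s hs hs1
    rw [real_inner_smul_right, norm_smul, mul_pow, Real.norm_eq_abs, sq_abs] at this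
    nlinarith
  have hlim : Tendsto (fun s : ℝ => s * (a * ‖W‖ ^ 2)) (𝓝[>] 0) (𝓝 0) := by
    simpa using (tendsto_id.mul_const (a * ‖W‖ ^ 2)).mono_left (nhdsWithin_le_nhds (a := 0))
  have := ge_of_tendsto hlim (by
    filter_upwards [Ioc_mem_nhdsGT (show (0 : ℝ) < 1 from one_pos)] with s hs
    exact hsmall s hs.1 hs.2)
  linarith

end InnerProductSpace

theorem stmt_14_general {n r : ℕ} (t : ℝ)
    (h : EuclideanSpace ℝ (Fin n × Fin r) → ℝ)
    (X c : EuclideanSpace ℝ (Fin n × Fin r))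
    (hh : ConvexOn ℝ Set.univ h)
    (T : Submodule ℝ (EuclideanSpace ℝ (Fin n × Fin r)))
    (g : EuclideanSpace ℝ (Fin n × Fin r) → ℝ)
    (hg : ∀ V, g V = (inner ℝ c V : ℝ) + (1 / (2 * t)) * ‖V‖ ^ 2 + h (X + V))
    (hmin : ∀ W ∈ T, g 0 ≤ g W) :
    ∃ ξ : EuclideanSpace ℝ (Fin n × Fin r),
      (∀ y, h X + (inner ℝ ξ (y - X) : ℝ) ≤ h y) ∧
      T.orthogonalProjection (c + ξ) = 0 := by
  have hdescent : ∀ W ∈ T, ⟪-c, W⟫_ℝ ≤ h (X + W) - h X := fun W hW => by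
    rw [inner_neg_left]
    refine hh.neg_inner_le_sub_of_forall_le_prox (1 / (2 * t)) fun s _ _ => ?_
    simpa [hg] using hmin (s • W) (T.smul_mem s hW)
  obtain ⟨ξ, hsubgrad, horth⟩ := hh.exists_subgradient_sub_mem_orthogonal X T (-c) hdescent
  refine ⟨ξ, hsubgrad, Submodule.orthogonalProjectionOnto_eq_zero_iff.2 ?_⟩
  rwa [sub_neg_eq_add, add_comm] at horth

/-- if `V = 0` minimizes the proximal-gradient subproblem over the
tangent space `T`, then `0 ∈ Proj_T (∇f(X) + ∂h(X))`, i.e. some Euclidean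
subgradient `ξ` of `h` at `X` satisfies `Proj_T (∇f(X) + ξ) = 0`. -/
theorem stmt_14 {n r : ℕ} (t : ℝ) (ht : 0 < t)
    (f h : EuclideanSpace ℝ (Fin n × Fin r) → ℝ)
    (X c : EuclideanSpace ℝ (Fin n × Fin r))
    (hc : HasGradientAt f c X)
    (hh : ConvexOn ℝ Set.univ h)
    (T : Submodule ℝ (EuclideanSpace ℝ (Fin n × Fin r)))
    (g : EuclideanSpace ℝ (Fin n × Fin r) → ℝ)
    (hg : ∀ V, g V = (inner ℝ c V : ℝ) + (1 / (2 * t)) * ‖V‖ ^ 2 + h (X + V))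
    (hmin : ∀ W ∈ T, g 0 ≤ g W) :
    ∃ ξ : EuclideanSpace ℝ (Fin n × Fin r),
      (∀ y, h X + (inner ℝ ξ (y - X) : ℝ) ≤ h y) ∧
      T.orthogonalProjection (c + ξ) = 0 :=
  stmt_14_general t h X c hh T g hg hmin
end

section
/- Let h : ℝ^d → ℝ be convex with proximal mapping prox_h, and let g(v) = ⟨c, v⟩ + (1/(2t))‖v‖² + h(x + v) for fixed c, x ∈ ℝ^d and t > 0. Then v* ∈ ℝ^d minimizes g over a subspace T with associated constraint A(v) = 0 (where T = ker A, A linear surjective onto its range) if and only if there exists a Lagrange multiplier Λ with v* = prox_{th}(x − t(c − A*(Λ))) − x and A(v*) = 0. -/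
/-!
Writing `y = x - t • (c - a)`, the proximal objective `½‖x + w - y‖² + t h(x + w)` equals
`t (g w - ⟪a, w⟫)` plus a constant. It is strictly convex, so `prox_{th} y = x + v` exactly when
`v` minimizes the Lagrangian `g - ⟪a, ·⟫` on the whole space. For `a = A†Λ` the Lagrangian agrees
with `g` on `ker A`, which gives one direction. Conversely, if `v` minimizes `g` on `ker A`,
separating the strict epigraph of `w ↦ g (v + w) - g v` from `ker A × {0}` yields a subgradient of
`g` at `v` orthogonal to `ker A`, and in finite dimensions `(ker A)ᗮ = range A†`.
-/

open Set
open scoped RealInnerProductSpace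

lemma ContinuousLinearMap.eq_zero_of_forall_le_apply {M : Type*} [AddCommGroup M] [Module ℝ M]
    [TopologicalSpace M] {f : M →L[ℝ] ℝ} {K : Submodule ℝ M} {s : ℝ} (hf : ∀ q ∈ K, s ≤ f q) :
    ∀ q ∈ K, f q = 0 := by
  intro q hq
  by_contra hfq
  have := hf (((s - 1) / f q) • q) (K.smul_mem _ hq)
  rw [map_smul, smul_eq_mul, div_mul_cancel₀ _ hfq] at this
  linarith

theorem ConvexOn.exists_dual_le_of_nonneg_on_submodule {E : Type*} [NormedAddCommGroup E]
    [NormedSpace ℝ E] {G : E → ℝ} (hG : ConvexOn ℝ univ G) (hGc : Continuous G)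
    {K : Submodule ℝ E} (hK : ∀ k ∈ K, 0 ≤ G k) :
    ∃ φ : StrongDual ℝ E, (∀ k ∈ K, φ k = 0) ∧ ∀ w, φ w ≤ G w := by
  set O : Set (E × ℝ) := {q | q.1 ∈ univ ∧ G q.1 < q.2}
  set S : Submodule ℝ (E × ℝ) := K.prod ⊥
  have hO : IsOpen O := by
    simpa only [O, mem_univ, true_and] using
      isOpen_lt (f := fun q : E × ℝ ↦ G q.1) (hGc.comp continuous_fst) continuous_snd
  have hdisj : Disjoint O S := by
    refine disjoint_left.2 fun q ⟨_, hq⟩ hqS ↦ ?_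
    rw [SetLike.mem_coe, Submodule.mem_prod, Submodule.mem_bot] at hqS
    linarith [hK _ hqS.1, hqS.2]
  obtain ⟨f, s, hfO, hfS⟩ :=
    geometric_hahn_banach_open hG.convex_strict_epigraph hO S.convex hdisj
  have hf_S : ∀ q ∈ S, f q = 0 := f.eq_zero_of_forall_le_apply hfS
  have hs : s ≤ 0 := map_zero f ▸ hfS 0 S.zero_mem
  set φ := f.comp (ContinuousLinearMap.inl ℝ E ℝ)
  set β := f (0, 1)
  have hf_apply : ∀ w r, f (w, r) = φ w + r * β := fun w r ↦ by
    rw [← smul_eq_mul, ← map_smul]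
    simp [φ, ← map_add]
  -- `(0, G 0 + 1) ∈ O` makes the separating hyperplane non-vertical.
  have hβ : β < 0 := by
    have h0 := hfO (0, G 0 + 1) ⟨mem_univ _, lt_add_one _⟩
    rw [hf_apply, map_zero, zero_add] at h0
    nlinarith [hK 0 K.zero_mem]
  refine ⟨(-β)⁻¹ • φ, fun k hk ↦ ?_, fun w ↦ ?_⟩
  · have := hf_S (k, 0) (Submodule.mem_prod.2 ⟨hk, Submodule.zero_mem _⟩)
    simp [φ, this]
  · refine le_of_forall_gt_imp_ge_of_dense fun r hr ↦ ?_
    have hw := hfO (w, r) ⟨mem_univ _, hr⟩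
    rw [hf_apply] at hw
    rw [smul_apply, smul_eq_mul, inv_mul_le_iff₀ (neg_pos.2 hβ)]
    nlinarith

section InnerProductSpace

variable {E : Type*} [NormedAddCommGroup E] [InnerProductSpace ℝ E]

theorem ConvexOn.exists_mem_orthogonal_subgradient_of_forall_le [CompleteSpace E] {g : E → ℝ}
    (hg : ConvexOn ℝ univ g) (hgc : Continuous g) {K : Submodule ℝ E} {v : E} (hv : v ∈ K)
    (hmin : ∀ w ∈ K, g v ≤ g w) :
    ∃ u ∈ Kᗮ, ∀ w, g v + ⟪u, w - v⟫ ≤ g w := by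
  have hG : ConvexOn ℝ univ (fun w ↦ g (v + w) - g v) := by
    have := (hg.translate_right v).add_const (-g v)
    rw [preimage_univ] at this
    exact this.congr fun w _ ↦ by simp [sub_eq_add_neg]
  obtain ⟨φ, hφK, hφG⟩ := hG.exists_dual_le_of_nonneg_on_submodule
    ((hgc.comp (continuous_const_add v)).sub continuous_const)
    fun k hk ↦ sub_nonneg.2 (hmin _ (K.add_mem hv hk))
  refine ⟨(InnerProductSpace.toDual ℝ E).symm φ, (K.mem_orthogonal' _).2 fun k hk ↦ ?_,
    fun w ↦ ?_⟩
  · rw [InnerProductSpace.toDual_symm_apply, hφK k hk]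
  · have := hφG (w - v)
    rw [add_sub_cancel] at this
    rw [InnerProductSpace.toDual_symm_apply]
    linarith

theorem ContinuousLinearMap.exists_adjoint_apply_eq_of_mem_orthogonal_ker
    {F : Type*} [NormedAddCommGroup F] [InnerProductSpace ℝ F] [FiniteDimensional ℝ E]
    [CompleteSpace F] (A : E →L[ℝ] F) {u : E} (hu : u ∈ A.kerᗮ) :
    ∃ Λ, ContinuousLinearMap.adjoint A Λ = u := by
  rwa [A.orthogonal_ker, (Submodule.closed_of_finiteDimensional _).submodule_topologicalClosure_eq]
    at hu

lemma convexOn_inner_add_mul_norm_sq_add {h : E → ℝ} (hh : ConvexOn ℝ univ h) {k : ℝ}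
    (hk : 0 ≤ k) (c x : E) :
    ConvexOn ℝ univ (fun v ↦ ⟪c, v⟫ + k * ‖v‖ ^ 2 + h (x + v)) := by
  have hinner : ConvexOn ℝ univ (fun v : E ↦ ⟪c, v⟫) := (innerₛₗ ℝ c).convexOn convex_univ
  have hsq : ConvexOn ℝ univ (fun v : E ↦ ‖v‖ ^ 2) :=
    (convexOn_norm convex_univ).pow (fun _ _ ↦ norm_nonneg _) 2
  exact (hinner.add (hsq.smul hk)).add (hh.translate_right x)

lemma strictConvexOn_half_norm_sub_sq_add {φ : E → ℝ} (hφ : ConvexOn ℝ univ φ) (y : E) :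
    StrictConvexOn ℝ univ (fun z ↦ 1 / 2 * ‖z - y‖ ^ 2 + φ z) := by
  have hstrong : StrongConvexOn univ 1 (fun z ↦ 1 / 2 * ‖z - y‖ ^ 2 + φ z) := by
    rw [strongConvexOn_iff_convex]
    have hlin : ConvexOn ℝ univ (fun z : E ↦ ⟪-y, z⟫) := (innerₛₗ ℝ (-y)).convexOn convex_univ
    refine ((hlin.add hφ).add_const (1 / 2 * ‖y‖ ^ 2)).congr fun z _ ↦ ?_
    simp only [Pi.add_apply, norm_sub_sq_real, inner_neg_left, real_inner_comm y]
    ring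
  exact hstrong.strictConvexOn one_pos

variable {t : ℝ} {h g : E → ℝ} {c x : E}

lemma half_norm_sub_sq_add_mul_eq (ht : t ≠ 0)
    (hg : ∀ v, g v = ⟪c, v⟫ + 1 / (2 * t) * ‖v‖ ^ 2 + h (x + v)) (a w : E) :
    1 / 2 * ‖x + w - (x - t • (c - a))‖ ^ 2 + t * h (x + w)
      = t * (g w - ⟪a, w⟫) + t ^ 2 / 2 * ‖c - a‖ ^ 2 := by
  rw [show x + w - (x - t • (c - a)) = w + t • (c - a) by abel, norm_add_sq_real,
    inner_smul_right, norm_smul, Real.norm_eq_abs, mul_pow, sq_abs, inner_sub_right, hg w,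
    real_inner_comm w, real_inner_comm w]
  field_simp
  ring

lemma eq_add_iff_forall_sub_inner_le (ht : 0 < t) (hh : ConvexOn ℝ univ h)
    (hg : ∀ v, g v = ⟪c, v⟫ + 1 / (2 * t) * ‖v‖ ^ 2 + h (x + v)) {a u : E}
    (hu : ∀ z, 1 / 2 * ‖u - (x - t • (c - a))‖ ^ 2 + t * h u
      ≤ 1 / 2 * ‖z - (x - t • (c - a))‖ ^ 2 + t * h z) (v : E) :
    u = x + v ↔ ∀ w, g v - ⟪a, v⟫ ≤ g w - ⟪a, w⟫ := by
  have hobj := half_norm_sub_sq_add_mul_eq ht.ne' hg a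
  constructor
  · rintro rfl w
    have := hu (x + w)
    rw [hobj, hobj] at this
    nlinarith
  · intro hv
    refine (strictConvexOn_half_norm_sub_sq_add (hh.smul ht.le) _).eq_of_isMinOn
      (isMinOn_univ_iff.2 hu) (isMinOn_univ_iff.2 fun z ↦ ?_) (mem_univ _) (mem_univ _)
    rw [← add_sub_cancel x z]
    simp only [smul_eq_mul, hobj]
    nlinarith [hv (z - x)]

end InnerProductSpace

/-- KKT characterization of the minimizer of
`g(v) = ⟨c,v⟩ + (1/(2t))‖v‖² + h(x+v)` over the subspace `ker A`: `v*` is a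
minimizer iff there is a Lagrange multiplier `Λ` with
`v* = prox_{th}(x - t(c - A*Λ)) - x` and `A v* = 0`. -/
theorem stmt_17 {d m : ℕ} (t : ℝ) (ht : 0 < t)
    (h : EuclideanSpace ℝ (Fin d) → ℝ) (hh : ConvexOn ℝ Set.univ h)
    (p : EuclideanSpace ℝ (Fin d) → EuclideanSpace ℝ (Fin d))
    (hp : ∀ y z, (1 / 2) * ‖p y - y‖ ^ 2 + t * h (p y) ≤ (1 / 2) * ‖z - y‖ ^ 2 + t * h z)
    (c x : EuclideanSpace ℝ (Fin d))
    (A : EuclideanSpace ℝ (Fin d) →L[ℝ] EuclideanSpace ℝ (Fin m))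
    (g : EuclideanSpace ℝ (Fin d) → ℝ)
    (hg : ∀ v, g v = (inner ℝ c v : ℝ) + (1 / (2 * t)) * ‖v‖ ^ 2 + h (x + v))
    (v : EuclideanSpace ℝ (Fin d)) :
    (A v = 0 ∧ ∀ w, A w = 0 → g v ≤ g w) ↔
    ∃ Λ : EuclideanSpace ℝ (Fin m),
      v = p (x - t • (c - (ContinuousLinearMap.adjoint A) Λ)) - x ∧ A v = 0 := by
  have hprox (a : EuclideanSpace ℝ (Fin d)) :=
    eq_add_iff_forall_sub_inner_le ht hh hg (hp (x - t • (c - a))) v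
  constructor
  · rintro ⟨hAv, hmin⟩
    have hgconv : ConvexOn ℝ univ g := by
      rw [show g = _ from funext hg]
      exact convexOn_inner_add_mul_norm_sq_add hh (by positivity) c x
    obtain ⟨u, hu, hsub⟩ := hgconv.exists_mem_orthogonal_subgradient_of_forall_le
      (continuousOn_univ.1 (hgconv.continuousOn isOpen_univ)) (K := A.ker) hAv hmin
    obtain ⟨Λ, rfl⟩ := A.exists_adjoint_apply_eq_of_mem_orthogonal_ker hu
    refine ⟨Λ, eq_sub_of_add_eq' ((hprox _).2 fun w ↦ ?_).symm, hAv⟩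
    linarith [hsub w, inner_sub_right (𝕜 := ℝ) (ContinuousLinearMap.adjoint A Λ) w v]
  · rintro ⟨Λ, hv, hAv⟩
    have hlag := (hprox (ContinuousLinearMap.adjoint A Λ)).1 (by rw [hv]; abel)
    refine ⟨hAv, fun w hw ↦ ?_⟩
    simpa [ContinuousLinearMap.adjoint_inner_left, hAv, hw] using hlag w
end
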